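/- The solutions f_ε diverge uniformly as the ambiguity parameter grows: for every M > 0 there exists E > 0 such that for every ε > E and every C² solution f_ε of HJB(ε), one has f_ε(x) ≥ M for all x ∈ [0,b]. -/

import Mathlib

open Set

/-- The Hamiltonian H_ε(x,y,z) = (2/σ²)(m·z + ½σ²ε·z² − ϱ·y + h(x)). -/
noncomputable def Hfun (σ ϱ m ε : ℝ) (h : ℝ → ℝ) (x y z : ℝ) : ℝ :=
  (2 / σ ^ 2) * (m * z + (1 / 2) * σ ^ 2 * ε * z ^ 2 - ϱ * y + h x)

/-- f (with first and second derivatives f', f'') is a C² solution of HJB(ε):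
min{f'' + H_ε(x,f,f'), f', r − f'} = 0 on (0,b), f'(0) = 0, f'(b) = r. -/
def IsHJBSolution (b σ ϱ r m ε : ℝ) (h f f' f'' : ℝ → ℝ) : Prop :=
  (∀ x ∈ Icc (0:ℝ) b, HasDerivWithinAt f (f' x) (Icc (0:ℝ) b) x) ∧
  (∀ x ∈ Icc (0:ℝ) b, HasDerivWithinAt f' (f'' x) (Icc (0:ℝ) b) x) ∧
  ContinuousOn f'' (Icc (0:ℝ) b) ∧
  (∀ x ∈ Ioo (0:ℝ) b,
    min (min (f'' x + Hfun σ ϱ m ε h x (f x) (f' x)) (f' x)) (r - f' x) = 0) ∧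
  f' 0 = 0 ∧ f' b = r

/-!
Since `min {f'' + H_ε, f', r - f'} = 0` and `f'` runs from `0` to `r`, we have `0 ≤ f' ≤ r`, so
`f` is `r`-Lipschitz and varies by at most `r b` on `[0, b]`. At the last point `x₀` where
`f' = r / 2`, both gradient constraints are slack, so `f''(x₀) + H_ε = 0`, and `f''(x₀) ≥ 0`.
Hence `H_ε(x₀, f(x₀), r / 2) ≤ 0`, i.e. `ϱ f(x₀) ≥ m r / 2 + σ² ε r² / 8 + h(x₀)`, which grows
linearly in `ε` because `h ≥ h(0) = 0`.
-/

open Filter Topology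

theorem exists_mem_Ioo_eq_and_deriv_nonneg {g g' : ℝ → ℝ} {a b c : ℝ} (hab : a ≤ b)
    (hg : ∀ x ∈ Icc a b, HasDerivWithinAt g (g' x) (Icc a b) x) (ha : g a < c) (hb : c < g b) :
    ∃ x ∈ Ioo a b, g x = c ∧ 0 ≤ g' x := by
  have hcont : ContinuousOn g (Icc a b) := fun x hx => (hg x hx).continuousWithinAt
  -- `x₀` is the last point where `g ≤ c`; to its right `g > c`, so `g` is minimal at `x₀`
  -- on `[x₀, b]`.
  obtain ⟨x₀, ⟨hx₀, hx₀c⟩, hmax⟩ : ∃ x₀, IsGreatest (Icc a b ∩ {x | g x ≤ c}) x₀ :=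
    (isCompact_Icc.of_isClosed_subset
        (hcont.preimage_isClosed_of_isClosed isClosed_Icc isClosed_Iic) inter_subset_left
      ).exists_isGreatest ⟨a, left_mem_Icc.2 hab, ha.le⟩
  have hx₀b : x₀ < b := hx₀.2.lt_of_ne (by rintro rfl; exact hb.not_ge hx₀c)
  have hright : ∀ y ∈ Ioc x₀ b, c < g y := fun y hy => not_le.1 fun hyc =>
    hy.1.not_ge (hmax ⟨⟨hx₀.1.trans hy.1.le, hy.2⟩, hyc⟩)
  have hsub : Icc x₀ b ⊆ Icc a b := Icc_subset_Icc_left hx₀.1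
  have hnhds : Ioc x₀ b ∈ 𝓝[>] x₀ := Ioc_mem_nhdsGT hx₀b
  have hx₀eq : g x₀ = c := by
    refine le_antisymm hx₀c
      (ge_of_tendsto ?_ (eventually_of_mem hnhds fun y hy => (hright y hy).le))
    have := ((hcont x₀ hx₀).mono (Ioc_subset_Icc_self.trans hsub))
    rwa [ContinuousWithinAt, nhdsWithin_Ioc_eq_nhdsGT hx₀b] at this
  have hmin : IsMinOn g (Icc x₀ b) x₀ := isMinOn_iff.2 fun y hy => by
    rcases hy.1.eq_or_lt with rfl | hlt
    · exact le_rfl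
    · exact hx₀eq ▸ (hright y ⟨hlt, hy.2⟩).le
  refine ⟨x₀, ⟨?_, hx₀b⟩, hx₀eq, ?_⟩
  · exact hx₀.1.lt_of_ne (by rintro rfl; exact ha.ne hx₀eq)
  · have := hmin.localize.hasFDerivWithinAt_nonneg ((hg x₀ hx₀).mono hsub).hasFDerivWithinAt
      (y := 1) (one_mem_posTangentConeAt_iff_frequently.2 (eventually_of_mem
        (Icc_mem_nhdsGT hx₀b) fun y hy => hy).frequently)
    simpa using this

theorem eq_of_min_min_eq {α : Type*} [LinearOrder α] {a b c d : α} (h : min (min a b) c = d)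
    (hb : d < b) (hc : d < c) : a = d := by
  rw [min_assoc] at h
  rcases min_eq_iff.1 h with ⟨rfl, -⟩ | ⟨h', -⟩
  · rfl
  · exact absurd h' (lt_min hb hc).ne'

theorem Hfun_nonpos_iff {σ ϱ m ε x y z : ℝ} {h : ℝ → ℝ} (hσ : σ ≠ 0) :
    Hfun σ ϱ m ε h x y z ≤ 0 ↔ m * z + 1 / 2 * σ ^ 2 * ε * z ^ 2 - ϱ * y + h x ≤ 0 := by
  have hc : 0 < 2 / σ ^ 2 := by positivity
  exact ⟨fun hH => nonpos_of_mul_nonpos_right hH hc, mul_nonpos_of_nonneg_of_nonpos hc.le⟩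

namespace IsHJBSolution

variable {b σ ϱ r m ε : ℝ} {h f f' f'' : ℝ → ℝ}

theorem deriv_mem_Icc (hf : IsHJBSolution b σ ϱ r m ε h f f' f'') (hr : 0 ≤ r) :
    ∀ x ∈ Icc 0 b, f' x ∈ Icc 0 r := by
  obtain ⟨-, -, -, heq, h0, hfb⟩ := hf
  intro x hx
  rcases hx.1.eq_or_lt with hx0 | hx0
  · rw [← hx0, h0]
    exact left_mem_Icc.2 hr
  rcases hx.2.eq_or_lt with hxb | hxb
  · rw [hxb, hfb]
    exact right_mem_Icc.2 hr
  have := (heq x ⟨hx0, hxb⟩).ge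
  simp only [le_min_iff, sub_nonneg] at this
  exact ⟨this.1.2, this.2⟩

theorem abs_sub_le_mul (hf : IsHJBSolution b σ ϱ r m ε h f f' f'') (hr : 0 ≤ r) {x y : ℝ}
    (hx : x ∈ Icc 0 b) (hy : y ∈ Icc 0 b) : |f y - f x| ≤ r * |y - x| :=
  Convex.norm_image_sub_le_of_norm_hasDerivWithin_le hf.1
    (fun z hz => (Real.norm_of_nonneg (hf.deriv_mem_Icc hr z hz).1).trans_le
      (hf.deriv_mem_Icc hr z hz).2)
    (convex_Icc 0 b) hx hy

theorem exists_Hfun_nonpos (hf : IsHJBSolution b σ ϱ r m ε h f f' f'') (hb : 0 ≤ b)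
    (hr : 0 < r) : ∃ x ∈ Icc 0 b, Hfun σ ϱ m ε h x (f x) (r / 2) ≤ 0 := by
  obtain ⟨-, hf', -, heq, h0, hfb⟩ := hf
  obtain ⟨x, hx, hfx, hf''x⟩ :=
    exists_mem_Ioo_eq_and_deriv_nonneg hb hf' (by linarith) (c := r / 2) (by linarith)
  have := eq_of_min_min_eq (heq x hx) (by linarith) (by linarith)
  rw [hfx] at this
  exact ⟨x, Ioo_subset_Icc_self hx, by linarith⟩

end IsHJBSolution

theorem stmt18_general (b σ ϱ r m : ℝ) (hb : 0 < b) (hσ : 0 < σ) (hϱ : 0 < ϱ) (hr : 0 < r)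
    (h : ℝ → ℝ)
    (hmono : StrictMonoOn h (Icc (0:ℝ) b)) (h0 : h 0 = 0) :
    ∀ M > (0:ℝ), ∃ E > (0:ℝ), ∀ ε > E, ∀ fe fe' fe'' : ℝ → ℝ,
      IsHJBSolution b σ ϱ r m ε h fe fe' fe'' →
      ∀ x ∈ Icc (0:ℝ) b, M ≤ fe x := by
  intro M hM
  refine ⟨8 * (ϱ * (M + r * b) + |m| * r / 2) / (σ ^ 2 * r ^ 2), by positivity, ?_⟩
  intro ε hε f f' f'' hf x hx
  obtain ⟨x₀, hx₀, hH⟩ := hf.exists_Hfun_nonpos hb.le hr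
  rw [Hfun_nonpos_iff hσ.ne'] at hH
  have hhx₀ : 0 ≤ h x₀ := h0 ▸ hmono.monotoneOn (left_mem_Icc.2 hb.le) hx₀ hx₀.1
  have hfx₀ : f x₀ - f x ≤ r * b := calc
    f x₀ - f x ≤ r * |x₀ - x| := (le_abs_self _).trans (hf.abs_sub_le_mul hr.le hx hx₀)
    _ ≤ r * b := by gcongr; exact abs_sub_le_of_nonneg_of_le hx₀.1 hx₀.2 hx.1 hx.2
  have hε' : ϱ * (M + r * b) + |m| * r / 2 < σ ^ 2 * ε * r ^ 2 / 8 := by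
    rw [gt_iff_lt, div_lt_iff₀ (by positivity)] at hε
    linarith
  have hm : -|m| * (r / 2) ≤ m * (r / 2) := by gcongr; exact neg_abs_le m
  have : ϱ * (M + r * b) < ϱ * f x₀ := by linarith
  linarith [lt_of_mul_lt_mul_left this hϱ.le]

/-- The solutions f_ε diverge uniformly as the ambiguity parameter
grows: for every M > 0 there exists E > 0 such that for every ε > E and every C²
solution f_ε of HJB(ε), one has f_ε(x) ≥ M for all x ∈ [0,b]. -/
theorem stmt18 (b σ ϱ r m : ℝ) (hb : 0 < b) (hσ : 0 < σ) (hϱ : 0 < ϱ) (hr : 0 < r)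
    (h : ℝ → ℝ)
    (hLip : ∃ K : NNReal, LipschitzOnWith K h (Icc (0:ℝ) b))
    (hconv : ConvexOn ℝ (Icc (0:ℝ) b) h)
    (hmono : StrictMonoOn h (Icc (0:ℝ) b)) (h0 : h 0 = 0) :
    ∀ M > (0:ℝ), ∃ E > (0:ℝ), ∀ ε > E, ∀ fe fe' fe'' : ℝ → ℝ,
      IsHJBSolution b σ ϱ r m ε h fe fe' fe'' →
      ∀ x ∈ Icc (0:ℝ) b, M ≤ fe x :=
  stmt18_general b σ ϱ r m hb hσ hϱ hr h hmono h0
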